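/- Let p be a projection, e an effect, and α a real number with 0 ≤ α ≤ 1 and pep = α·p. Then the infimum of e and p⊥ = 1 − p exists in the set of effects. More precisely: if α = 0, then e ≤ 1 − p, so e itself is the infimum of e and 1 − p among effects; and if α > 0, then g := e − α⁻¹ e p e is an effect with g ≤ e and g ≤ 1 − p, and every effect f with f ≤ e and f ≤ 1 − p satisfies f ≤ g. -/

import Mathlib

/-!
With `s = √e`, the hypothesis `p e p = α p` says exactly that `q = α⁻¹ s p s` is a projection, so
`0 ≤ s (1 - q) s = e - α⁻¹ e p e`. This `g = e - α⁻¹ e p e` is annihilated by `p` on both sides,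
which together with `g ≤ 1` gives `g ≤ 1 - p`. An effect `f ≤ 1 - p` is annihilated by `p` as
well, so if also `f ≤ e` then `e - f` satisfies the hypothesis on `e` with the same `α` and
`(e - f) p (e - f) = e p e`; positivity of `(e - f) - α⁻¹ e p e` is then `f ≤ g`. When `α = 0`,
`p e p = 0` already forces `e p = p e = 0`, hence `e ≤ 1 - p`.
-/

section StarOrderedRing

variable {R : Type*} [Ring R] [PartialOrder R] [StarRing R] [StarOrderedRing R] {p a : R}

lemma IsStarProjection.le_one_sub_of_mul_eq_zero (hp : IsStarProjection p) (ha : a ≤ 1)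
    (hpa : p * a = 0) (hap : a * p = 0) : a ≤ 1 - p := by
  have hconj : (1 - p) * (1 - a) * (1 - p) = 1 - p - a := by
    have h1 : (1 - p) * a = a := by rw [sub_mul, one_mul, hpa, sub_zero]
    have h2 : a * (1 - p) = a := by rw [mul_sub, mul_one, hap, sub_zero]
    rw [mul_one_sub (1 - p) a, sub_mul, hp.one_sub.isIdempotentElem.eq, h1, h2]
  have := hp.one_sub.isSelfAdjoint.conjugate_nonneg (sub_nonneg.2 ha)
  rw [hconj, sub_sub, sub_nonneg] at this
  rwa [le_sub_iff_add_le']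

end StarOrderedRing

section Algebra

variable {𝕜 R : Type*} [Field 𝕜] [Ring R] [Algebra 𝕜 R] {p e : R} {α : 𝕜}

lemma mul_sub_inv_smul_mul_mul_eq_zero (hα : α ≠ 0) (h : p * e * p = α • p) :
    p * (e - α⁻¹ • (e * p * e)) = 0 ∧ (e - α⁻¹ • (e * p * e)) * p = 0 := by
  constructor
  · rw [mul_sub, mul_smul_comm, ← mul_assoc, ← mul_assoc, h, smul_mul_assoc, inv_smul_smul₀ hα,
      sub_self]
  · rw [sub_mul, smul_mul_assoc, show e * p * e * p = e * (p * e * p) by simp only [mul_assoc], h,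
      mul_smul_comm, inv_smul_smul₀ hα, sub_self]

end Algebra

section RealAlgebra

variable {R : Type*} [Ring R] [StarRing R] [Algebra ℝ R] [StarModule ℝ R] {p s : R} {α : ℝ}

lemma isStarProjection_inv_smul_mul_mul (hs : IsSelfAdjoint s) (hp : IsSelfAdjoint p)
    (hα : α ≠ 0) (h : p * (s * s) * p = α • p) : IsStarProjection (α⁻¹ • (s * p * s)) where
  isIdempotentElem := by
    have : s * p * s * (s * p * s) = s * (p * (s * s) * p) * s := by simp only [mul_assoc]
    rw [IsIdempotentElem, smul_mul_smul_comm, this, h, mul_smul_comm, smul_mul_assoc, smul_smul,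
      inv_mul_cancel_right₀ hα]
  isSelfAdjoint := (IsSelfAdjoint.all α⁻¹).smul (hp.conjugate_self hs)

end RealAlgebra

section CStarAlgebra

variable {A : Type*} [CStarAlgebra A] [PartialOrder A] [StarOrderedRing A] {p a e : A}

lemma IsSelfAdjoint.mul_eq_zero_of_conjugate_eq_zero (hp : IsSelfAdjoint p) (ha : 0 ≤ a)
    (h : p * a * p = 0) : a * p = 0 ∧ p * a = 0 := by
  have hsqrt : CFC.sqrt a * p = 0 := by
    have := CFC.IsSelfAdjoint.norm_mul_mul_self_of_nonneg p hp ha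
    rwa [h, norm_zero, eq_comm, sq_eq_zero_iff, norm_eq_zero] at this
  have hap : a * p = 0 := by rw [← CFC.sqrt_mul_sqrt_self a, mul_assoc, hsqrt, mul_zero]
  refine ⟨hap, ?_⟩
  simpa [hp.star_eq, ha.star_eq] using congr(star $hap)

lemma IsStarProjection.mul_eq_zero_of_le_one_sub (hp : IsStarProjection p) (ha : 0 ≤ a)
    (hap : a ≤ 1 - p) : a * p = 0 ∧ p * a = 0 := by
  obtain ⟨h1, h2⟩ := hp.one_sub.mul_right_and_mul_left_of_nonneg_of_le ha hap
  constructor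
  · simpa [mul_sub] using h1
  · simpa [sub_mul] using h2

lemma IsSelfAdjoint.sub_inv_smul_mul_mul_nonneg (hp : IsSelfAdjoint p) (he : 0 ≤ e) {α : ℝ}
    (hα : α ≠ 0) (h : p * e * p = α • p) : 0 ≤ e - α⁻¹ • (e * p * e) := by
  have hs := (CFC.sqrt_nonneg e).isSelfAdjoint
  have hss : CFC.sqrt e * CFC.sqrt e = e := CFC.sqrt_mul_sqrt_self e he
  have hq := isStarProjection_inv_smul_mul_mul hs hp hα (by rwa [hss])
  convert hs.conjugate_nonneg hq.one_sub_nonneg using 1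
  have hconj : CFC.sqrt e * (CFC.sqrt e * p * CFC.sqrt e) * CFC.sqrt e = e * p * e := by
    conv_rhs => rw [← hss]
    simp only [mul_assoc]
  rw [mul_one_sub, sub_mul, mul_smul_comm, smul_mul_assoc, hconj, hss]

lemma IsStarProjection.le_sub_inv_smul_mul_mul (hp : IsStarProjection p) {f : A} (hf : 0 ≤ f)
    (hfe : f ≤ e) (hf1 : f ≤ 1 - p) {α : ℝ} (hα : α ≠ 0) (h : p * e * p = α • p) :
    f ≤ e - α⁻¹ • (e * p * e) := by
  obtain ⟨hfp, hpf⟩ := hp.mul_eq_zero_of_le_one_sub hf hf1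
  have hpdp : p * (e - f) * p = α • p := by rw [mul_sub, sub_mul, hpf, zero_mul, sub_zero, h]
  have hdpd : (e - f) * p * (e - f) = e * p * e := by
    rw [sub_mul e f p, hfp, sub_zero, mul_sub, mul_assoc e p f, hpf, mul_zero, sub_zero]
  have := hp.isSelfAdjoint.sub_inv_smul_mul_mul_nonneg (sub_nonneg.2 hfe) hα hpdp
  rwa [hdpd, sub_right_comm, sub_nonneg] at this

end CStarAlgebra

theorem stmt19_general {A : Type*} [CStarAlgebra A] [PartialOrder A] [StarOrderedRing A]
    (p e : A) (hp : IsSelfAdjoint p) (hp2 : p ^ 2 = p)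
    (he0 : 0 ≤ e) (he1 : e ≤ 1)
    (α : ℝ) (hpep : p * e * p = α • p) :
    (α = 0 → e ≤ 1 - p) ∧
    (0 < α →
      0 ≤ e - α⁻¹ • (e * p * e) ∧ e - α⁻¹ • (e * p * e) ≤ 1 ∧
      e - α⁻¹ • (e * p * e) ≤ e ∧ e - α⁻¹ • (e * p * e) ≤ 1 - p ∧
      ∀ f : A, 0 ≤ f → f ≤ 1 → f ≤ e → f ≤ 1 - p → f ≤ e - α⁻¹ • (e * p * e)) := by
  have hproj : IsStarProjection p := ⟨by rwa [sq] at hp2, hp⟩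
  refine ⟨fun hα ↦ ?_, fun hα ↦ ?_⟩
  · obtain ⟨hep, hpe⟩ := hp.mul_eq_zero_of_conjugate_eq_zero he0 (by rw [hpep, hα, zero_smul])
    exact hproj.le_one_sub_of_mul_eq_zero he1 hpe hep
  · have hepe : 0 ≤ α⁻¹ • (e * p * e) :=
      smul_nonneg (inv_nonneg.2 hα.le) (he0.isSelfAdjoint.conjugate_nonneg hproj.nonneg)
    have hge : e - α⁻¹ • (e * p * e) ≤ e := sub_le_self e hepe
    obtain ⟨hpg, hgp⟩ := mul_sub_inv_smul_mul_mul_eq_zero hα.ne' hpep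
    exact ⟨hp.sub_inv_smul_mul_mul_nonneg he0 hα.ne' hpep, hge.trans he1, hge,
      hproj.le_one_sub_of_mul_eq_zero (hge.trans he1) hpg hgp,
      fun f hf0 _ hfe hfp ↦ hproj.le_sub_inv_smul_mul_mul hf0 hfe hfp hα.ne' hpep⟩

/-- In a unital C*-algebra, let `p` be a projection, `e` an effect, and
`α` a real number with `0 ≤ α ≤ 1` and `pep = α • p`.  Then the infimum of `e` and
`p⊥ = 1 − p` exists in the set of effects.  More precisely: if `α = 0` then
`e ≤ 1 − p` (so `e` itself is the infimum); and if `α > 0` then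
`g := e − α⁻¹ • (epe)` is an effect with `g ≤ e` and `g ≤ 1 − p`, and every effect `f`
with `f ≤ e` and `f ≤ 1 − p` satisfies `f ≤ g`. -/
theorem stmt19 {A : Type*} [CStarAlgebra A] [PartialOrder A] [StarOrderedRing A]
    (p e : A) (hp : IsSelfAdjoint p) (hp2 : p ^ 2 = p)
    (he0 : 0 ≤ e) (he1 : e ≤ 1)
    (α : ℝ) (hα0 : 0 ≤ α) (hα1 : α ≤ 1) (hpep : p * e * p = α • p) :
    (α = 0 → e ≤ 1 - p) ∧
    (0 < α →
      0 ≤ e - α⁻¹ • (e * p * e) ∧ e - α⁻¹ • (e * p * e) ≤ 1 ∧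
      e - α⁻¹ • (e * p * e) ≤ e ∧ e - α⁻¹ • (e * p * e) ≤ 1 - p ∧
      ∀ f : A, 0 ≤ f → f ≤ 1 → f ≤ e → f ≤ 1 - p → f ≤ e - α⁻¹ • (e * p * e)) :=
  stmt19_general p e hp hp2 he0 he1 α hpep
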